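/- Let 0 < α < 1 and let a be a real number. Define y(t) = E_α(a·t^α) = Σ_{n=0}^∞ (a·t^α)^n / Γ(1+nα). Then y(0) = 1, and for every t > 0 the function s ↦ (1/Γ(1-α)) · ∫_0^s (s-ξ)^{-α} · (y(ξ) − 1) dξ has derivative a·y(t) at t. Hence y = E_α(a t^α) is a solution of the initial value problem D^α y = a y, y(0) = 1, where D^α is the Jumarie fractional derivative of order α with start point 0. -/

import Mathlib

/-!
Expanding `E_α(aξ^α) - 1` in powers of `ξ^α`, the Riemann–Liouville integral
`∫_0^s (s-ξ)^(-α) ξ^γ dξ` of each term is a Beta integral, so integrating termwise (the series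
of absolute integrals converges) gives `Γ(1-α) · a s E_{α,2}(a s^α)`. Differentiating this power
series termwise lowers each `Γ(2 + nα)` to `Γ(1 + nα)` and returns `a E_α(a s^α)`. All the series
converge by the ratio test, since log-convexity of `Γ` gives `Γ(x + 1 - α) ≤ x^(-α) Γ(x + 1)`.
-/

open intervalIntegral Real

/-- The one-parameter Mittag-Leffler function `E_α(x) = Σ_{n=0}^∞ x^n / Γ(1+nα)`. -/
noncomputable def mittagLeffler (α x : ℝ) : ℝ := ∑' n : ℕ, x ^ n / Real.Gamma (1 + n * α)

open Filter Set MeasureTheory Topology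

theorem Real.Gamma_add_one_sub_le_rpow_neg_mul {α x : ℝ} (hα0 : 0 < α) (hα1 : α < 1)
    (hx : 0 < x) : Gamma (x + 1 - α) ≤ x ^ (-α) * Gamma (x + 1) := by
  have hlogConvex := Gamma_mul_add_mul_le_rpow_Gamma_mul_rpow_Gamma hx (by linarith : 0 < x + 1)
    hα0 (sub_pos.2 hα1) (add_sub_cancel α 1)
  have hΓ : 0 ≤ Gamma x := (Gamma_pos_of_pos hx).le
  rw [show α * x + (1 - α) * (x + 1) = x + 1 - α by ring, Gamma_add_one hx.ne'] at hlogConvex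
  refine hlogConvex.trans_eq ?_
  rw [mul_rpow hx.le hΓ, mul_left_comm, ← rpow_add' hΓ (by simp), add_sub_cancel, rpow_one,
    Gamma_add_one hx.ne', show (1 : ℝ) - α = 1 + -α by ring, rpow_add hx, rpow_one]
  ring

theorem summable_pow_div_Gamma_add_mul {α β : ℝ} (hα0 : 0 < α) (hα1 : α < 1) (hβ : 0 < β)
    (x : ℝ) : Summable fun n : ℕ => x ^ n / Gamma (β + n * α) := by
  set z : ℕ → ℝ := fun n => β + n * α + α - 1
  have hz : Tendsto z atTop atTop :=
    tendsto_atTop_add_const_right _ _ <| tendsto_atTop_add_const_right _ _ <|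
      tendsto_atTop_add_const_left _ _ <| tendsto_natCast_atTop_atTop.atTop_mul_const hα0
  have hsmall : Tendsto (fun n => |x| * z n ^ (-α)) atTop (𝓝 0) := by
    simpa using ((tendsto_rpow_neg_atTop hα0).comp hz).const_mul |x|
  refine summable_of_ratio_norm_eventually_le (r := 1 / 2) (by norm_num) ?_
  filter_upwards [hz.eventually_gt_atTop 0, hsmall.eventually (ge_mem_nhds one_half_pos)]
    with n hzn hxn
  have hΓ := Gamma_add_one_sub_le_rpow_neg_mul hα0 hα1 hzn
  rw [show z n + 1 - α = β + n * α by ring, show z n + 1 = β + ↑(n + 1) * α by push_cast; ring]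
    at hΓ
  have hΓn : 0 < Gamma (β + n * α) := Gamma_pos_of_pos (by positivity)
  have hΓsucc : 0 < Gamma (β + ↑(n + 1) * α) := Gamma_pos_of_pos (by positivity)
  have hstep : |x| * Gamma (β + n * α) ≤ 1 / 2 * Gamma (β + ↑(n + 1) * α) :=
    calc |x| * Gamma (β + n * α) ≤ |x| * (z n ^ (-α) * Gamma (β + ↑(n + 1) * α)) :=
          mul_le_mul_of_nonneg_left hΓ (abs_nonneg x)
      _ = |x| * z n ^ (-α) * Gamma (β + ↑(n + 1) * α) := by ring
      _ ≤ 1 / 2 * Gamma (β + ↑(n + 1) * α) := mul_le_mul_of_nonneg_right hxn hΓsucc.le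
  rw [norm_div, norm_div, norm_pow, norm_pow, Real.norm_eq_abs, norm_of_nonneg hΓn.le,
    norm_of_nonneg hΓsucc.le]
  calc |x| ^ (n + 1) / Gamma (β + ↑(n + 1) * α)
      = |x| ^ n * (|x| * Gamma (β + n * α)) / (Gamma (β + n * α) * Gamma (β + ↑(n + 1) * α)) := by
        field_simp; ring
    _ ≤ |x| ^ n * (1 / 2 * Gamma (β + ↑(n + 1) * α)) /
          (Gamma (β + n * α) * Gamma (β + ↑(n + 1) * α)) := by gcongr
    _ = 1 / 2 * (|x| ^ n / Gamma (β + n * α)) := by field_simp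

/-- The two-parameter Mittag-Leffler function `E_{α,β}`. -/
noncomputable def mittagLeffler₂ (α β x : ℝ) : ℝ := ∑' n : ℕ, x ^ n / Gamma (β + n * α)

theorem mittagLeffler_zero (α : ℝ) : mittagLeffler α 0 = 1 := by
  rw [mittagLeffler, tsum_eq_single 0 fun n hn => by simp [zero_pow hn]]
  simp

theorem mittagLeffler_sub_one {α : ℝ} (hα0 : 0 < α) (hα1 : α < 1) (x : ℝ) :
    mittagLeffler α x - 1 = x * mittagLeffler₂ α (1 + α) x := by
  rw [mittagLeffler, (summable_pow_div_Gamma_add_mul hα0 hα1 one_pos x).tsum_eq_zero_add,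
    mittagLeffler₂, ← tsum_mul_left]
  simp only [pow_zero, CharP.cast_eq_zero, zero_mul, add_zero, Gamma_one, div_one,
    add_sub_cancel_left]
  congr 1 with n
  rw [pow_succ', mul_div_assoc]
  push_cast
  ring_nf

theorem integral_rpow_mul_sub_rpow {p q s : ℝ} (hp : 0 < p) (hq : 0 < q) (hs : 0 < s) :
    ∫ ξ in 0..s, ξ ^ (p - 1) * (s - ξ) ^ (q - 1) =
      s ^ (p + q - 1) * (Gamma p * Gamma q / Gamma (p + q)) := by
  have hbeta := Complex.betaIntegral_scaled p q hs
  rw [Complex.betaIntegral_eq_Gamma_mul_div _ _ (by simpa) (by simpa)] at hbeta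
  apply Complex.ofReal_injective
  rw [← intervalIntegral.integral_ofReal]
  convert hbeta using 1
  · refine integral_congr fun ξ hξ => ?_
    rw [uIcc_of_le hs.le] at hξ
    push_cast [Complex.ofReal_cpow hξ.1, Complex.ofReal_cpow (sub_nonneg.2 hξ.2)]
    rfl
  · push_cast [← Complex.Gamma_ofReal, Complex.ofReal_cpow hs.le]
    rfl

theorem intervalIntegral.tsum_integral_eq_integral_tsum {ι E : Type*} [Countable ι]
    [NormedAddCommGroup E] [NormedSpace ℝ E] {a b : ℝ} (hab : a ≤ b) {F : ι → ℝ → E}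
    (hF : ∀ i, IntervalIntegrable (F i) volume a b)
    (hsum : Summable fun i => ∫ x in a..b, ‖F i x‖) :
    ∑' i, ∫ x in a..b, F i x = ∫ x in a..b, ∑' i, F i x := by
  simp only [integral_of_le hab] at hsum ⊢
  exact integral_tsum_of_summable_integral_norm (fun i => (hF i).1) hsum

theorem integral_sub_rpow_neg_mul_rpow {α γ s : ℝ} (hα : α < 1) (hγ : -1 < γ) (hs : 0 < s) :
    ∫ ξ in 0..s, (s - ξ) ^ (-α) * ξ ^ γ =
      Gamma (1 - α) * Gamma (γ + 1) / Gamma (γ + 2 - α) * s ^ (γ + 1 - α) := by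
  have hbeta := integral_rpow_mul_sub_rpow (by linarith : 0 < γ + 1) (sub_pos.2 hα) hs
  rw [show γ + 1 - 1 = γ by ring, show 1 - α - 1 = -α by ring,
    show γ + 1 + (1 - α) - 1 = γ + 1 - α by ring, show γ + 1 + (1 - α) = γ + 2 - α by ring]
    at hbeta
  simp_rw [mul_comm ((s - _) ^ (-α))]
  rw [hbeta]
  ring

theorem intervalIntegrable_sub_rpow_neg_mul_rpow {α γ s : ℝ} (hα : α < 1) (hγ : -1 < γ)
    (hs : 0 < s) : IntervalIntegrable (fun ξ => (s - ξ) ^ (-α) * ξ ^ γ) volume 0 s := by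
  refine intervalIntegrable_of_integral_ne_zero ?_
  rw [integral_sub_rpow_neg_mul_rpow hα hγ hs]
  have := Gamma_pos_of_pos (sub_pos.2 hα)
  have := Gamma_pos_of_pos (by linarith : 0 < γ + 1)
  have := Gamma_pos_of_pos (by linarith : 0 < γ + 2 - α)
  positivity

theorem integral_sub_rpow_neg_mul_mittagLeffler_sub_one {α : ℝ} (hα0 : 0 < α) (hα1 : α < 1)
    (a : ℝ) {s : ℝ} (hs : 0 < s) :
    ∫ ξ in 0..s, (s - ξ) ^ (-α) * (mittagLeffler α (a * ξ ^ α) - 1) =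
      Gamma (1 - α) * a * s * mittagLeffler₂ α 2 (a * s ^ α) := by
  have hγ : ∀ n : ℕ, -1 < α + α * n := fun n => neg_one_lt_zero.trans (by positivity)
  set term : ℕ → ℝ → ℝ := fun n ξ =>
    a ^ (n + 1) / Gamma (1 + α + n * α) * ((s - ξ) ^ (-α) * ξ ^ (α + α * n))
  have hseries : ∀ ξ ∈ uIcc 0 s,
      (s - ξ) ^ (-α) * (mittagLeffler α (a * ξ ^ α) - 1) = ∑' n, term n ξ := by
    intro ξ hξ
    rw [uIcc_of_le hs.le] at hξ
    rw [mittagLeffler_sub_one hα0 hα1, mittagLeffler₂, ← tsum_mul_left, ← tsum_mul_left]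
    refine tsum_congr fun n => ?_
    simp only [term]
    rw [rpow_add' hξ.1 (by positivity : 0 < α + α * n).ne', rpow_mul_natCast hξ.1]
    ring
  have hterm : ∀ (b : ℝ) (n : ℕ), ∫ ξ in 0..s,
      b ^ (n + 1) / Gamma (1 + α + n * α) * ((s - ξ) ^ (-α) * ξ ^ (α + α * n)) =
        Gamma (1 - α) * (b * s * ((b * s ^ α) ^ n / Gamma (2 + n * α))) := by
    intro b n
    have hΓ : Gamma (1 + α + n * α) ≠ 0 := (Gamma_pos_of_pos (by positivity)).ne'
    rw [intervalIntegral.integral_const_mul, integral_sub_rpow_neg_mul_rpow hα1 (hγ n) hs,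
      show α + α * n + 1 - α = 1 + α * n by ring, show α + α * n + 1 = 1 + α + n * α by ring,
      show α + α * n + 2 - α = 2 + n * α by ring, rpow_add hs, rpow_one,
      rpow_mul_natCast hs.le]
    field_simp
    ring
  have hnorm : ∀ n, ∫ ξ in 0..s, ‖term n ξ‖ =
      ∫ ξ in 0..s, |a| ^ (n + 1) / Gamma (1 + α + n * α) * ((s - ξ) ^ (-α) * ξ ^ (α + α * n)) := by
    refine fun n => integral_congr fun ξ hξ => ?_
    rw [uIcc_of_le hs.le] at hξ
    have hΓ : 0 < Gamma (1 + α + n * α) := Gamma_pos_of_pos (by positivity)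
    have hkernel : 0 ≤ (s - ξ) ^ (-α) * ξ ^ (α + α * n) :=
      mul_nonneg (rpow_nonneg (sub_nonneg.2 hξ.2) _) (rpow_nonneg hξ.1 _)
    simp only [term]
    rw [norm_mul, norm_of_nonneg hkernel, norm_div, norm_pow, norm_of_nonneg hΓ.le,
      Real.norm_eq_abs]
  have hsummable : Summable fun n => ∫ ξ in 0..s, ‖term n ξ‖ := by
    simp_rw [hnorm, hterm |a|]
    exact ((summable_pow_div_Gamma_add_mul hα0 hα1 two_pos _).mul_left _).mul_left _
  calc ∫ ξ in 0..s, (s - ξ) ^ (-α) * (mittagLeffler α (a * ξ ^ α) - 1)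
      = ∫ ξ in 0..s, ∑' n, term n ξ := integral_congr hseries
    _ = ∑' n, ∫ ξ in 0..s, term n ξ := (tsum_integral_eq_integral_tsum hs.le
          (fun n => (intervalIntegrable_sub_rpow_neg_mul_rpow hα1 (hγ n) hs).const_mul _)
          hsummable).symm
    _ = ∑' n : ℕ, Gamma (1 - α) * (a * s * ((a * s ^ α) ^ n / Gamma (2 + n * α))) :=
          tsum_congr (hterm a)
    _ = Gamma (1 - α) * a * s * mittagLeffler₂ α 2 (a * s ^ α) := by
          rw [tsum_mul_left, tsum_mul_left, mittagLeffler₂]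
          ring

theorem hasDerivAt_mul_mittagLeffler₂_two {α : ℝ} (hα0 : 0 < α) (hα1 : α < 1) (a : ℝ) {t : ℝ}
    (ht : 0 < t) :
    HasDerivAt (fun s => s * mittagLeffler₂ α 2 (a * s ^ α)) (mittagLeffler α (a * t ^ α)) t := by
  set g : ℕ → ℝ → ℝ := fun n s => a ^ n / Gamma (2 + n * α) * s ^ (1 + α * n)
  set g' : ℕ → ℝ → ℝ := fun n s =>
    a ^ n / Gamma (2 + n * α) * ((1 + α * n) * s ^ (1 + α * n - 1))
  have hg : ∀ (n : ℕ) (s : ℝ), 0 ≤ s → s * ((a * s ^ α) ^ n / Gamma (2 + n * α)) = g n s := by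
    intro n s hs
    simp only [g]
    rw [rpow_add' hs (by positivity : 0 < 1 + α * n).ne', rpow_one, mul_pow,
      rpow_mul_natCast hs]
    ring
  have hg' : ∀ (n : ℕ) (s : ℝ), 0 ≤ s → g' n s = (a * s ^ α) ^ n / Gamma (1 + n * α) := by
    intro n s hs
    have hΓ : Gamma (2 + n * α) = (1 + α * n) * Gamma (1 + n * α) := by
      rw [show 2 + n * α = 1 + n * α + 1 by ring, Gamma_add_one (by positivity)]
      ring
    have : 0 < Gamma (1 + n * α) := Gamma_pos_of_pos (by positivity)
    simp only [g']
    rw [add_sub_cancel_left, mul_pow, ← rpow_mul_natCast hs, hΓ]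
    field_simp
  have hderiv : HasDerivAt (fun s => ∑' n, g n s) (∑' n, g' n t) t := by
    have ht' : t ∈ Ioo 0 (t + 1) := ⟨ht, lt_add_one t⟩
    refine hasDerivAt_tsum_of_isPreconnected
      (summable_pow_div_Gamma_add_mul hα0 hα1 one_pos (|a| * (t + 1) ^ α)) isOpen_Ioo
      isPreconnected_Ioo (fun n s _ => ?_) (fun n s hs => ?_) ht' ?_ ht'
    · exact (hasDerivAt_rpow_const (Or.inr (by simp; positivity))).const_mul _
    · rw [hg' n s hs.1.le, norm_div, norm_pow, norm_mul, Real.norm_eq_abs, Real.norm_eq_abs,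
        abs_of_nonneg (rpow_nonneg hs.1.le _),
        norm_of_nonneg (Gamma_pos_of_pos (by positivity : 0 < 1 + n * α)).le]
      have : 0 ≤ s ^ α := rpow_nonneg hs.1.le α
      gcongr
      exacts [hs.1.le, hs.2.le]
    · exact ((summable_pow_div_Gamma_add_mul hα0 hα1 two_pos (a * t ^ α)).mul_left t).congr
        fun n => hg n t ht.le
  rw [show mittagLeffler α (a * t ^ α) = ∑' n, g' n t from
    tsum_congr fun n => (hg' n t ht.le).symm]
  refine hderiv.congr_of_eventuallyEq ?_
  filter_upwards [Ioi_mem_nhds ht] with s hs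
  rw [mittagLeffler₂, ← tsum_mul_left]
  exact tsum_congr fun n => hg n s hs.le

/-- `y(t) = E_α(a t^α)` solves the initial value problem `D^α y = a y`, `y(0) = 1`,
where `D^α` is the Jumarie fractional derivative of order `α ∈ (0,1)` with start
point `0`. -/
theorem mittagLeffler_solves_ivp (α a : ℝ) (hα0 : 0 < α) (hα1 : α < 1) :
    mittagLeffler α (a * (0:ℝ) ^ α) = 1 ∧
    ∀ t : ℝ, 0 < t →
      HasDerivAt
        (fun s : ℝ => (1 / Real.Gamma (1 - α)) *
          ∫ ξ in (0:ℝ)..s, (s - ξ) ^ (-α) * (mittagLeffler α (a * ξ ^ α) - 1))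
        (a * mittagLeffler α (a * t ^ α)) t := by
  refine ⟨by rw [zero_rpow hα0.ne', mul_zero, mittagLeffler_zero], fun t ht => ?_⟩
  have hΓ : Gamma (1 - α) ≠ 0 := (Gamma_pos_of_pos (sub_pos.2 hα1)).ne'
  refine ((hasDerivAt_mul_mittagLeffler₂_two hα0 hα1 a ht).const_mul a).congr_of_eventuallyEq ?_
  filter_upwards [Ioi_mem_nhds ht] with s hs
  rw [integral_sub_rpow_neg_mul_mittagLeffler_sub_one hα0 hα1 a hs]
  field_simp
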